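/- arXiv:1403.5498 — 2 statements merged into one kernel-verified Lean document; each statement's English description precedes it below -/
import Mathlib

section
/- Let A be a unital *-algebra, (Λ^•, d) an n-dimensional differential calculus whose top module Λ^n is free of rank 1 with basis τ, and suppose each Λ^k is a self-dual right A-module with Hermitian structure (·,·)_k. Then for each k there exists a unique linear map ∗_H : Λ^k → Λ^{n−k} satisfying τ·(∗_H α, β)_{n−k} = α* ∧ β for all α ∈ Λ^k, β ∈ Λ^{n−k}. -/
/-!
Since `Λⁿ` is free of rank one on `τ`, every `ω ∈ Λⁿ` has a unique coordinate `c(ω) ∈ A` with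
`ω = τ·c(ω)`, and `c` is right `A`-linear. For fixed `α`, the functional `β ↦ c(α* ∧ β)` is therefore
right `A`-linear on `Λ^{n−k}`, so self-duality represents it as `(η, ·)_{n−k}` for some `η =: ∗_H α`.
Positivity of the Hermitian structure makes the representing vector unique, which gives both the
linearity of `∗_H` and its uniqueness.
-/

open MulOpposite

theorem eq_of_forall_inn_eq {A N : Type*} [AddGroup A] [Preorder A] [AddGroup N]
    (inn : N → N → A) (hinn_addl : ∀ η η' β, inn (η + η') β = inn η β + inn η' β)
    (hinn_pos : ∀ η, η ≠ 0 → 0 < inn η η) {η η' : N} (h : ∀ β, inn η β = inn η' β) :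
    η = η' := by
  by_contra hne
  have hsub : ∀ β, inn (η - η') β = inn η β - inn η' β := fun β =>
    (AddMonoidHom.mk' (inn · β) (hinn_addl · · β)).map_sub η η'
  have hpos := hinn_pos (η - η') (sub_ne_zero.mpr hne)
  rw [hsub, h, sub_self] at hpos
  exact lt_irrefl _ hpos

section Coordinate

variable {A M : Type*} [Ring A] [AddCommGroup M] [Module Aᵐᵒᵖ M]

noncomputable def spanSingletonEquivOfExistsUnique (τ : M) (hτ : ∀ m : M, ∃! a : A, m = op a • τ) :
    Aᵐᵒᵖ ≃ₗ[Aᵐᵒᵖ] M :=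
  LinearEquiv.ofBijective (LinearMap.toSpanSingleton Aᵐᵒᵖ M τ)
    ⟨fun x y hxy => unop_injective <| (hτ (x • τ)).unique rfl (by simpa using hxy),
      fun m => ⟨op (hτ m).exists.choose, (hτ m).exists.choose_spec.symm⟩⟩

noncomputable def coord (τ : M) (hτ : ∀ m : M, ∃! a : A, m = op a • τ) (m : M) : A :=
  unop ((spanSingletonEquivOfExistsUnique τ hτ).symm m)

variable (τ : M) (hτ : ∀ m : M, ∃! a : A, m = op a • τ)

theorem coord_eq_iff {m : M} {a : A} : coord τ hτ m = a ↔ m = op a • τ := by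
  rw [coord, ← op_inj, op_unop, LinearEquiv.symm_apply_eq]
  rfl

theorem coord_add (m m' : M) : coord τ hτ (m + m') = coord τ hτ m + coord τ hτ m' := by
  simp [coord]

theorem coord_op_smul (a : A) (m : M) : coord τ hτ (op a • m) = coord τ hτ m * a := by
  simp [coord]

end Coordinate

theorem existsUnique_linearMap_forall_inn_eq {R A Λ N : Type*} [CommRing R] [StarRing R]
    [Ring A] [Preorder A] [Algebra R A] [AddCommGroup Λ] [Module R Λ]
    [AddCommGroup N] [Module R N] [Module Aᵐᵒᵖ N]
    (inn : N → N → A)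
    (hinn_addl : ∀ η η' β, inn (η + η') β = inn η β + inn η' β)
    (hinn_smull : ∀ (c : R) η β, inn (c • η) β = algebraMap R A (starRingEnd R c) * inn η β)
    (hinn_pos : ∀ η, η ≠ 0 → 0 < inn η η)
    (hsd : ∀ T : N → A, (∀ y y', T (y + y') = T y + T y') →
      (∀ y (a : A), T (op a • y) = T y * a) → ∃ η, ∀ β, T β = inn η β)
    (P : Λ → N → A)
    (hP_addl : ∀ α α' β, P (α + α') β = P α β + P α' β)
    (hP_smull : ∀ (c : R) α β, P (c • α) β = algebraMap R A (starRingEnd R c) * P α β)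
    (hP_addr : ∀ α β β', P α (β + β') = P α β + P α β')
    (hP_rlin : ∀ α β (a : A), P α (op a • β) = P α β * a) :
    ∃! H : Λ →ₗ[R] N, ∀ α β, inn (H α) β = P α β := by
  have hext {η η' : N} (h : ∀ β, inn η β = inn η' β) : η = η' :=
    eq_of_forall_inn_eq inn hinn_addl hinn_pos h
  choose H hH using fun α => hsd (P α) (hP_addr α) (hP_rlin α)
  refine ⟨⟨⟨H, fun α α' => hext fun β => ?_⟩, fun c α => hext fun β => ?_⟩,
    fun α β => (hH α β).symm,
    fun H' hH' => LinearMap.ext fun α => hext fun β => (hH' α β).trans (hH α β)⟩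
  · rw [← hH, hP_addl, hH, hH, hinn_addl]
  · rw [← hH, hP_smull, hH, RingHom.id_apply, hinn_smull]

theorem stmt_3_general {A : Type*} [Ring A] [PartialOrder A] [Algebra ℂ A]
    {Λk ΛnK Λn : Type*}
    [AddCommGroup Λk] [Module ℂ Λk]
    [AddCommGroup ΛnK] [Module ℂ ΛnK] [Module Aᵐᵒᵖ ΛnK]
    [AddCommGroup Λn] [Module ℂ Λn] [Module Aᵐᵒᵖ Λn]
    -- the graded involution `α ↦ α*` on `Λ^k`
    (starK : Λk → Λk)
    (hstarK_add : ∀ x y, starK (x + y) = starK x + starK y)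
    (hstarK_smul : ∀ (c : ℂ) x, starK (c • x) = (starRingEnd ℂ c) • starK x)
    -- the wedge product `Λ^k × Λ^{n−k} → Λ^n`
    (wedge : Λk → ΛnK → Λn)
    (hw_addl : ∀ x x' y, wedge (x + x') y = wedge x y + wedge x' y)
    (hw_addr : ∀ x y y', wedge x (y + y') = wedge x y + wedge x y')
    (hw_smull : ∀ (c : ℂ) x y, wedge (c • x) y = c • wedge x y)
    (hw_rlin : ∀ x y (a : A), wedge x (op a • y) = op a • wedge x y)
    -- the Hermitian structure on `Λ^{n−k}`
    (inn : ΛnK → ΛnK → A)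
    (hinn_addl : ∀ η η' β, inn (η + η') β = inn η β + inn η' β)
    (hinn_smull : ∀ (c : ℂ) η β,
      inn (c • η) β = algebraMap ℂ A (starRingEnd ℂ c) * inn η β)
    (hinn_pos : ∀ η, η ≠ 0 → 0 < inn η η)
    -- `Λ^n` is free of rank one with basis `τ`, on which `ℂ` acts through `A`
    (τ : Λn)
    (hfree : ∀ ωn : Λn, ∃! a : A, ωn = op a • τ)
    (hscal : ∀ (c : ℂ) (m : Λn), c • m = op (algebraMap ℂ A c) • m)
    -- `Λ^{n−k}` is self-dual
    (hsd : ∀ T : ΛnK → A, (∀ y y', T (y + y') = T y + T y') →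
      (∀ y (a : A), T (op a • y) = T y * a) → ∃ η, ∀ β, T β = inn η β) :
    ∃! H : Λk →ₗ[ℂ] ΛnK,
      ∀ (α : Λk) (β : ΛnK), op (inn (H α) β) • τ = wedge (starK α) β := by
  let c := coord τ hfree
  have hrepr := existsUnique_linearMap_forall_inn_eq inn hinn_addl hinn_smull hinn_pos hsd
    (fun α β => c (wedge (starK α) β))
    (fun α α' β => by simp only [hstarK_add, hw_addl, coord_add, c])
    (fun z α β => by
      simp only [hstarK_smul, hw_smull, hscal, coord_op_smul, c, Algebra.commutes])
    (fun α β β' => by simp only [hw_addr, coord_add, c])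
    (fun α β a => by simp only [hw_rlin, coord_op_smul, c])
  refine (existsUnique_congr fun H => forall₂_congr fun α β => ?_).mp hrepr
  exact eq_comm.trans ((coord_eq_iff τ hfree).trans eq_comm)

/-- Proposition (existence and uniqueness of the Hodge operator): for an
`n`-dimensional differential calculus whose top module `Λⁿ` is free of rank one
with basis (volume form) `τ`, and whose `Λ^{n−k}` is a self-dual right `A`-module
with Hermitian structure `inn`, there is a unique linear map `∗_H : Λ^k → Λ^{n−k}`
with `τ·(∗_H α, β)_{n−k} = α* ∧ β` for all `α ∈ Λ^k`, `β ∈ Λ^{n−k}`. -/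
theorem stmt_3 {A : Type*} [Ring A] [StarRing A] [PartialOrder A] [Algebra ℂ A]
    {Λk ΛnK Λn : Type*}
    [AddCommGroup Λk] [Module ℂ Λk]
    [AddCommGroup ΛnK] [Module ℂ ΛnK] [Module Aᵐᵒᵖ ΛnK] [SMulCommClass ℂ Aᵐᵒᵖ ΛnK]
    [AddCommGroup Λn] [Module ℂ Λn] [Module Aᵐᵒᵖ Λn] [SMulCommClass ℂ Aᵐᵒᵖ Λn]
    -- the graded involution `α ↦ α*` on `Λ^k`
    (starK : Λk → Λk)
    (hstarK_add : ∀ x y, starK (x + y) = starK x + starK y)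
    (hstarK_smul : ∀ (c : ℂ) x, starK (c • x) = (starRingEnd ℂ c) • starK x)
    -- the wedge product `Λ^k × Λ^{n−k} → Λ^n`
    (wedge : Λk → ΛnK → Λn)
    (hw_addl : ∀ x x' y, wedge (x + x') y = wedge x y + wedge x' y)
    (hw_addr : ∀ x y y', wedge x (y + y') = wedge x y + wedge x y')
    (hw_smull : ∀ (c : ℂ) x y, wedge (c • x) y = c • wedge x y)
    (hw_rlin : ∀ x y (a : A), wedge x (op a • y) = op a • wedge x y)
    -- the Hermitian structure on `Λ^{n−k}`
    (inn : ΛnK → ΛnK → A)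
    (hinn_addl : ∀ η η' β, inn (η + η') β = inn η β + inn η' β)
    (hinn_addr : ∀ η β β', inn η (β + β') = inn η β + inn η β')
    (hinn_smull : ∀ (c : ℂ) η β,
      inn (c • η) β = algebraMap ℂ A (starRingEnd ℂ c) * inn η β)
    (hinn_rlin : ∀ η β (a : A), inn η (op a • β) = inn η β * a)
    (hinn_herm : ∀ η β, star (inn η β) = inn β η)
    (hinn_pos : ∀ η, η ≠ 0 → 0 < inn η η)
    -- `Λ^n` is free of rank one with basis `τ`, on which `ℂ` acts through `A`
    (τ : Λn)
    (hfree : ∀ ωn : Λn, ∃! a : A, ωn = op a • τ)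
    (hscal : ∀ (c : ℂ) (m : Λn), c • m = op (algebraMap ℂ A c) • m)
    -- `Λ^{n−k}` is self-dual
    (hsd : ∀ T : ΛnK → A, (∀ y y', T (y + y') = T y + T y') →
      (∀ y (a : A), T (op a • y) = T y * a) → ∃ η, ∀ β, T β = inn η β) :
    ∃! H : Λk →ₗ[ℂ] ΛnK,
      ∀ (α : Λk) (β : ΛnK), op (inn (H α) β) • τ = wedge (starK α) β :=
  stmt_3_general starK hstarK_add hstarK_smul wedge hw_addl hw_addr hw_smull hw_rlin inn hinn_addl
    hinn_smull hinn_pos τ hfree hscal hsd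
end

section
/- With the Hodge operator on S³ defined by ∗_H(ω_a) = (1/2)ε_{abc} ω_b ∧ ω_c and ∗_H(ω_a ∧ ω_b) = ε_{abc} ω_c, and the connection α = λ ω_a ⊗ T_a with curvature F = (λ/2)(λ−1)ε_{abc} ω_a ∧ ω_b ⊗ T_c, one has ∗_H F = (λ − 1)α and D(∗_H F) = d(∗_H F) + [α, ∗_H F] = λ(λ−1)(λ − 1/2) ε_{abc} ω_a ∧ ω_b ⊗ T_c. In particular the Yang–Mills equation D(∗_H F) = 0 holds if and only if λ ∈ {0, 1/2, 1}. -/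
noncomputable section

/-- Levi-Civita symbol `ε_{abc}` on three indices. -/
def eps (a b c : Fin 3) : ℂ :=
  ((((b : ℤ) - (a : ℤ)) * ((c : ℤ) - (b : ℤ)) * ((c : ℤ) - (a : ℤ)) : ℤ) : ℂ) / 2

/-- The standard `su(2)` generators in the fundamental representation. -/
def Tmat : Fin 3 → Matrix (Fin 2) (Fin 2) ℂ :=
  ![(1 / 2 : ℂ) • !![0, Complex.I; Complex.I, 0],
    (1 / 2 : ℂ) • !![0, -1; 1, 0],
    (1 / 2 : ℂ) • !![Complex.I, 0; 0, -Complex.I]]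

/-!
Write `A = ω_a ⊗ T_a` for the Maurer–Cartan form and `X = ε_{abc} ω_a∧ω_b ⊗ T_c`, so that
`α = λA`. Anticommutativity of the `ω_a` turns `A∧A` into `(1/2)[T_a,T_b] ω_a∧ω_b = X/2`, the
Maurer–Cartan relation gives `dA = -X/2`, and the contraction `ε_{abc}ε_{abd} = 2δ_{cd}` gives
`∗X = 2A`. Hence `F = λ(λ-1)/2 · X`, `∗F = λ(λ-1) · A`, and
`D(∗F) = λ(λ-1)(dA + 2λ A∧A) = λ(λ-1)(λ-1/2) · X`.
-/

theorem eps_cyclic (a b c : Fin 3) : eps a b c = eps b c a := by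
  unfold eps; push_cast; ring

theorem sum_eps_mul_eps (c d : Fin 3) :
    ∑ a, ∑ b, eps a b c * eps a b d = if c = d then 2 else 0 := by
  fin_cases c <;> fin_cases d <;> simp [eps, Fin.sum_univ_three] <;> norm_num

theorem lie_Tmat (a b : Fin 3) : ⁅Tmat a, Tmat b⁆ = ∑ c, eps a b c • Tmat c := by
  rw [Ring.lie_def]
  fin_cases a <;> fin_cases b <;> ext i j <;> fin_cases i <;> fin_cases j <;>
    simp [Tmat, eps, Fin.sum_univ_three] <;> ring_nf <;> simp [Complex.I_sq] <;> ring

theorem ofReal_cubic_eq_zero_iff (l : ℝ) :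
    (l : ℂ) * ((l : ℂ) - 1) * ((l : ℂ) - 1 / 2) = 0 ↔ l = 0 ∨ l = 1 / 2 ∨ l = 1 := by
  rw [show (l : ℂ) * ((l : ℂ) - 1) * ((l : ℂ) - 1 / 2) = ((l * (l - 1) * (l - 1 / 2) : ℝ) : ℂ) by
      push_cast; ring,
    Complex.ofReal_eq_zero, mul_eq_zero, mul_eq_zero, sub_eq_zero, sub_eq_zero]
  tauto

section

variable {W : Type*} [Ring W] [Algebra ℂ W]

theorem sum_smul_mul_eq_sum_half_sub {ι : Type*} [Fintype ι] {ω : ι → W}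
    (hanti : ∀ a b, ω a * ω b = -(ω b * ω a)) (c : ι → ι → ℂ) :
    ∑ a, ∑ b, c a b • (ω a * ω b) = ∑ a, ∑ b, ((c a b - c b a) / 2) • (ω a * ω b) := by
  have hswap : ∑ a, ∑ b, c b a • (ω a * ω b) = -∑ a, ∑ b, c a b • (ω a * ω b) := by
    rw [Finset.sum_comm]
    simp only [← Finset.sum_neg_distrib, ← smul_neg]
    refine Finset.sum_congr rfl fun a _ => Finset.sum_congr rfl fun b _ => ?_
    rw [hanti]
  simp only [sub_smul, Finset.sum_sub_distrib, div_eq_mul_inv, mul_comm _ (2 : ℂ)⁻¹,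
    ← smul_smul, ← Finset.smul_sum, hswap]
  module

variable {n : Type*} (T : Fin 3 → Matrix n n ℂ) (ω : Fin 3 → W)

def mcForm : Matrix n n W := Matrix.of fun i j => ∑ a, T a i j • ω a

def epsForm : Matrix n n W :=
  Matrix.of fun i j => ∑ a, ∑ b, ∑ c, (eps a b c * T c i j) • (ω a * ω b)

theorem smul_mcForm (r : ℂ) :
    r • mcForm T ω = Matrix.of fun i j => ∑ a, (r * T a i j) • ω a := by
  ext i j
  simp only [mcForm, Matrix.smul_apply, Matrix.of_apply, Finset.smul_sum, smul_smul]

variable {T ω}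

theorem mcForm_map_eq_smul_epsForm {d : W →ₗ[ℂ] W}
    (hMC : ∀ a, d (ω a) = ∑ b, ∑ c, (-(1 : ℂ) / 2 * eps a b c) • (ω b * ω c)) :
    (mcForm T ω).map d = (-(1 : ℂ) / 2) • epsForm T ω := by
  ext i j
  simp only [mcForm, epsForm, Matrix.map_apply, Matrix.of_apply, Matrix.smul_apply, map_sum,
    map_smul, hMC, Finset.smul_sum, smul_smul]
  rw [Finset.sum_comm]
  refine Finset.sum_congr rfl fun b _ => ?_
  rw [Finset.sum_comm]
  refine Finset.sum_congr rfl fun c _ => Finset.sum_congr rfl fun a _ => ?_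
  rw [eps_cyclic a b c]; ring_nf

theorem epsForm_map_eq_smul_mcForm {hodge : W →ₗ[ℂ] W}
    (hH2 : ∀ a b, hodge (ω a * ω b) = ∑ c, eps a b c • ω c) :
    (epsForm T ω).map hodge = (2 : ℂ) • mcForm T ω := by
  ext i j
  simp only [mcForm, epsForm, Matrix.map_apply, Matrix.of_apply, Matrix.smul_apply, map_sum,
    map_smul, hH2, Finset.smul_sum, smul_smul]
  have hcontract : ∀ c d, ∑ a, ∑ b, (eps a b c * T c i j * eps a b d) • ω d
      = ((if c = d then 2 else 0) * T c i j) • ω d := by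
    intro c d
    simp only [← sum_eps_mul_eps, ← Finset.sum_smul, Finset.sum_mul]
    congr 1
    refine Finset.sum_congr rfl fun a _ => Finset.sum_congr rfl fun b _ => ?_
    ring
  rw [← Finset.sum_product', Finset.sum_comm_cycle, Finset.sum_comm_cycle]
  simp only [Finset.sum_product, hcontract, ite_mul, zero_mul, ite_smul, zero_smul,
    Finset.sum_ite_eq, Finset.mem_univ, if_true]

theorem mcForm_mul_self [Fintype n] (hanti : ∀ a b, ω a * ω b = -(ω b * ω a))
    (hT : ∀ a b, ⁅T a, T b⁆ = ∑ c, eps a b c • T c) :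
    mcForm T ω * mcForm T ω = ((1 : ℂ) / 2) • epsForm T ω := by
  ext i j
  have hprod : (mcForm T ω * mcForm T ω) i j = ∑ a, ∑ b, (T a * T b) i j • (ω a * ω b) := by
    simp only [mcForm, Matrix.mul_apply, Matrix.of_apply, Finset.sum_mul, Finset.mul_sum,
      smul_mul_smul, Finset.sum_smul]
    rw [Finset.sum_comm_cycle]
    exact Finset.sum_congr rfl fun a _ => Finset.sum_comm
  rw [hprod, sum_smul_mul_eq_sum_half_sub hanti]
  simp only [← Matrix.sub_apply, ← Ring.lie_def, hT, epsForm, Matrix.smul_apply, Matrix.of_apply,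
    Matrix.sum_apply, Finset.smul_sum, Finset.sum_div, Finset.sum_smul, smul_smul]
  refine Finset.sum_congr rfl fun a _ => Finset.sum_congr rfl fun b _ =>
    Finset.sum_congr rfl fun c _ => ?_
  ring_nf

end

theorem stmt_11_general {W : Type*} [Ring W] [Algebra ℂ W]
    (ω : Fin 3 → W)
    (hanti : ∀ a b, ω a * ω b = -(ω b * ω a))
    (d hodge : W →ₗ[ℂ] W)
    (hMC : ∀ a, d (ω a) = ∑ b, ∑ c, (-(1 : ℂ) / 2 * eps a b c) • (ω b * ω c))
    (hH2 : ∀ a b, hodge (ω a * ω b) = ∑ c, eps a b c • ω c)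
    (l : ℝ) :
    let α : Matrix (Fin 2) (Fin 2) W :=
      Matrix.of fun i j => ∑ a, ((l : ℂ) * Tmat a i j) • ω a
    let F : Matrix (Fin 2) (Fin 2) W := α.map d + α * α
    let X : Matrix (Fin 2) (Fin 2) W :=
      Matrix.of fun i j => ∑ a, ∑ b, ∑ c, (eps a b c * Tmat c i j) • (ω a * ω b)
    let DHF : Matrix (Fin 2) (Fin 2) W :=
      (F.map hodge).map d + α * F.map hodge + F.map hodge * α
    (F.map hodge = Matrix.of fun i j => ∑ a, (((l : ℂ) - 1) * (l : ℂ) * Tmat a i j) • ω a) ∧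
    (DHF = ((l : ℂ) * ((l : ℂ) - 1) * ((l : ℂ) - 1 / 2)) • X) ∧
    (X ≠ 0 → (DHF = 0 ↔ l = 0 ∨ l = 1 / 2 ∨ l = 1)) := by
  intro α F X DHF
  have hα : α = (l : ℂ) • mcForm Tmat ω := (smul_mcForm _ _ _).symm
  have hdA : (mcForm Tmat ω).map d = (-(1 : ℂ) / 2) • X := mcForm_map_eq_smul_epsForm hMC
  have hAA : mcForm Tmat ω * mcForm Tmat ω = ((1 : ℂ) / 2) • X := mcForm_mul_self hanti lie_Tmat
  have hHX : X.map hodge = (2 : ℂ) • mcForm Tmat ω := epsForm_map_eq_smul_mcForm hH2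
  have hF : F = ((l : ℂ) * ((l : ℂ) - 1) / 2) • X := by
    simp only [F, hα, Matrix.map_smul _ _ (map_smul d _), hdA, Matrix.smul_mul, Matrix.mul_smul,
      hAA, smul_smul]
    module
  have hHF : F.map hodge = (((l : ℂ) - 1) * (l : ℂ)) • mcForm Tmat ω := by
    rw [hF, Matrix.map_smul _ _ (map_smul hodge _), hHX, smul_smul]
    ring_nf
  have hDHF : DHF = ((l : ℂ) * ((l : ℂ) - 1) * ((l : ℂ) - 1 / 2)) • X := by
    simp only [DHF, hHF, hα, Matrix.map_smul _ _ (map_smul d _), hdA, Matrix.smul_mul,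
      Matrix.mul_smul, hAA, smul_smul]
    module
  refine ⟨hHF.trans (smul_mcForm _ _ _), hDHF, fun hX => ?_⟩
  rw [hDHF, smul_eq_zero, or_iff_left hX, ofReal_cubic_eq_zero_iff]

/-- With the round Hodge operator on `S³` (`∗ω_a = (1/2)ε_{abc}ω_b∧ω_c`,
`∗(ω_a∧ω_b) = ε_{abc}ω_c`) and the connection `α = λ ω_a ⊗ T_a` with curvature
`F = (λ/2)(λ−1)ε_{abc} ω_a∧ω_b ⊗ T_c`, one has `∗F = (λ−1)α` and
`D(∗F) = d(∗F) + [α, ∗F] = λ(λ−1)(λ−1/2) ε_{abc} ω_a∧ω_b ⊗ T_c`; the Yang–Mills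
equation `D(∗F) = 0` holds iff `λ ∈ {0, 1/2, 1}`. -/
theorem stmt_11 {W : Type*} [Ring W] [Algebra ℂ W]
    (ω : Fin 3 → W)
    (hanti : ∀ a b, ω a * ω b = -(ω b * ω a))
    (d hodge : W →ₗ[ℂ] W)
    (hMC : ∀ a, d (ω a) = ∑ b, ∑ c, (-(1 : ℂ) / 2 * eps a b c) • (ω b * ω c))
    (hH1 : ∀ a, hodge (ω a) = ∑ b, ∑ c, ((1 : ℂ) / 2 * eps a b c) • (ω b * ω c))
    (hH2 : ∀ a b, hodge (ω a * ω b) = ∑ c, eps a b c • ω c)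
    (l : ℝ) :
    let α : Matrix (Fin 2) (Fin 2) W :=
      Matrix.of fun i j => ∑ a, ((l : ℂ) * Tmat a i j) • ω a
    let F : Matrix (Fin 2) (Fin 2) W := α.map d + α * α
    let X : Matrix (Fin 2) (Fin 2) W :=
      Matrix.of fun i j => ∑ a, ∑ b, ∑ c, (eps a b c * Tmat c i j) • (ω a * ω b)
    let DHF : Matrix (Fin 2) (Fin 2) W :=
      (F.map hodge).map d + α * F.map hodge + F.map hodge * α
    (F.map hodge = Matrix.of fun i j => ∑ a, (((l : ℂ) - 1) * (l : ℂ) * Tmat a i j) • ω a) ∧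
    (DHF = ((l : ℂ) * ((l : ℂ) - 1) * ((l : ℂ) - 1 / 2)) • X) ∧
    (X ≠ 0 → (DHF = 0 ↔ l = 0 ∨ l = 1 / 2 ∨ l = 1)) :=
  stmt_11_general ω hanti d hodge hMC hH2 l
end
end
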